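/- arXiv:2405.04025 — 3 statements merged into one kernel-verified Lean document; each statement's English description precedes it below -/
import Mathlib

section
/- Constraint violation under an inaccurate group predictor: let γ_k(x) = g(x,k)/E_X[g(X,k)] and γ̂_k(x) = ĝ(x,k)/E_X[ĝ(X,k)], with E_X[γ_k(X)] = E_X[γ̂_k(X)] = 1 for all k. Suppose π̂ : 𝒳 → [0,1]^{𝒴} satisfies |E_X[(γ̂_k(X) − γ̂_{k'}(X)) π̂(X,y)]| ≤ α for all k, k' in an index set I and a fixed class y. Then |E_X[(γ_k(X) − γ_{k'}(X)) π̂(X,y)]| ≤ min(1, α + ε) for all k, k' ∈ I, where ε = max_{k∈I} E_X[|γ_k(X) − γ̂_k(X)|]. -/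
open MeasureTheory

/-! Write `γ_k − γ_{k'} = (γ̂_k − γ̂_{k'}) + (γ_k − γ̂_k) − (γ_{k'} − γ̂_{k'})`. The first term is
controlled by feasibility. Each other term `a` has mean zero, and for `π̂ ∈ [0,1]` we have
`a π̂ ≤ a⁺ = (a + |a|)/2`, so `|E[a π̂]| ≤ E|a|/2 ≤ ε/2`. The same half-`L¹` bound applied to
`a = γ_k − γ_{k'}`, whose absolute value is at most `γ_k + γ_{k'}`, gives the bound `1`. -/

section

variable {X : Type*} [MeasurableSpace X] {μ : Measure X} {a f g p : X → ℝ}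

lemma integral_sub_mul (hfp : Integrable (fun x => f x * p x) μ)
    (hgp : Integrable (fun x => g x * p x) μ) :
    ∫ x, (f x - g x) * p x ∂μ = ∫ x, f x * p x ∂μ - ∫ x, g x * p x ∂μ := by
  simp only [sub_mul]
  exact integral_sub hfp hgp

lemma integrable_sub_mul (hfp : Integrable (fun x => f x * p x) μ)
    (hgp : Integrable (fun x => g x * p x) μ) :
    Integrable (fun x => (f x - g x) * p x) μ := by
  simp only [sub_mul]
  exact hfp.sub hgp

lemma integral_mul_le_half_integral_add_abs (ha : Integrable a μ)
    (hap : Integrable (fun x => a x * p x) μ) (hp : ∀ x, p x ∈ Set.Icc (0 : ℝ) 1) :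
    ∫ x, a x * p x ∂μ ≤ (∫ x, a x ∂μ + ∫ x, |a x| ∂μ) / 2 := by
  have hpos : ∀ x, a x * p x ≤ (a x + |a x|) / 2 := fun x => by
    obtain ⟨hp0, hp1⟩ := hp x
    rcases le_total 0 (a x) with h | h
    · rw [abs_of_nonneg h]; nlinarith
    · rw [abs_of_nonpos h]; nlinarith
  calc ∫ x, a x * p x ∂μ ≤ ∫ x, (a x + |a x|) / 2 ∂μ :=
        integral_mono hap ((ha.add ha.abs).div_const 2) hpos
    _ = (∫ x, a x ∂μ + ∫ x, |a x| ∂μ) / 2 := by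
        rw [integral_div, integral_add ha ha.abs]

lemma abs_integral_mul_le_half_integral_abs (ha : Integrable a μ)
    (hap : Integrable (fun x => a x * p x) μ) (ha0 : ∫ x, a x ∂μ = 0)
    (hp : ∀ x, p x ∈ Set.Icc (0 : ℝ) 1) :
    |∫ x, a x * p x ∂μ| ≤ (∫ x, |a x| ∂μ) / 2 := by
  have hupper := integral_mul_le_half_integral_add_abs ha hap hp
  have hlower := integral_mul_le_half_integral_add_abs (a := fun x => -a x) ha.neg
    (by simp only [neg_mul]; exact hap.neg) hp
  simp only [neg_mul, integral_neg, abs_neg, ha0] at hupper hlower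
  rw [abs_le]
  constructor <;> linarith

lemma abs_integral_sub_mul_le_one (hf0 : ∀ x, 0 ≤ f x) (hg0 : ∀ x, 0 ≤ g x)
    (hf : Integrable f μ) (hg : Integrable g μ)
    (hfp : Integrable (fun x => f x * p x) μ) (hgp : Integrable (fun x => g x * p x) μ)
    (hf1 : ∫ x, f x ∂μ = 1) (hg1 : ∫ x, g x ∂μ = 1) (hp : ∀ x, p x ∈ Set.Icc (0 : ℝ) 1) :
    |∫ x, (f x - g x) * p x ∂μ| ≤ 1 := by
  have hmean : ∫ x, (f x - g x) ∂μ = 0 := by rw [integral_sub hf hg, hf1, hg1, sub_self]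
  have habs : ∫ x, |f x - g x| ∂μ ≤ ∫ x, (f x + g x) ∂μ :=
    integral_mono (hf.sub hg).abs (hf.add hg) fun x =>
      abs_le.mpr ⟨by linarith [hf0 x], by linarith [hg0 x]⟩
  rw [integral_add hf hg, hf1, hg1] at habs
  have hhalf := abs_integral_mul_le_half_integral_abs (a := fun x => f x - g x) (hf.sub hg)
    (integrable_sub_mul hfp hgp) hmean hp
  linarith

lemma abs_integral_sub_mul_le_of_perturbation {fhat ghat : X → ℝ}
    (hf : Integrable f μ) (hg : Integrable g μ)
    (hfhat : Integrable fhat μ) (hghat : Integrable ghat μ)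
    (hfp : Integrable (fun x => f x * p x) μ) (hgp : Integrable (fun x => g x * p x) μ)
    (hfhatp : Integrable (fun x => fhat x * p x) μ)
    (hghatp : Integrable (fun x => ghat x * p x) μ)
    (hfm : ∫ x, f x ∂μ = ∫ x, fhat x ∂μ) (hgm : ∫ x, g x ∂μ = ∫ x, ghat x ∂μ)
    (hp : ∀ x, p x ∈ Set.Icc (0 : ℝ) 1) :
    |∫ x, (f x - g x) * p x ∂μ| ≤ |∫ x, (fhat x - ghat x) * p x ∂μ|
      + (∫ x, |f x - fhat x| ∂μ + ∫ x, |g x - ghat x| ∂μ) / 2 := by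
  have hf' := abs_integral_mul_le_half_integral_abs (a := fun x => f x - fhat x) (hf.sub hfhat)
    (integrable_sub_mul hfp hfhatp)
    (by rw [integral_sub hf hfhat, hfm, sub_self]) hp
  have hg' := abs_integral_mul_le_half_integral_abs (a := fun x => g x - ghat x) (hg.sub hghat)
    (integrable_sub_mul hgp hghatp)
    (by rw [integral_sub hg hghat, hgm, sub_self]) hp
  rw [integral_sub_mul hfp hfhatp] at hf'
  rw [integral_sub_mul hgp hghatp] at hg'
  rw [integral_sub_mul hfp hgp, integral_sub_mul hfhatp hghatp]
  set F := ∫ x, f x * p x ∂μ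
  set G := ∫ x, g x * p x ∂μ
  set Fhat := ∫ x, fhat x * p x ∂μ
  set Ghat := ∫ x, ghat x * p x ∂μ
  calc |F - G| = |(Fhat - Ghat) + ((F - Fhat) - (G - Ghat))| := by ring_nf
    _ ≤ |Fhat - Ghat| + (|F - Fhat| + |G - Ghat|) :=
        (abs_add_le _ _).trans (add_le_add_right (abs_sub _ _) _)
    _ ≤ _ := by linarith

end

theorem plugin_constraint_violation_general
    {𝒳 𝒴 ι : Type*} [MeasurableSpace 𝒳]
    (μ : Measure 𝒳)
    (γ γhat : ι → 𝒳 → ℝ)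
    (hγ0 : ∀ k x, 0 ≤ γ k x)
    (hγint : ∀ k, Integrable (γ k) μ) (hγhatint : ∀ k, Integrable (γhat k) μ)
    (hγmean : ∀ k, ∫ x, γ k x ∂μ = 1) (hγhatmean : ∀ k, ∫ x, γhat k x ∂μ = 1)
    (I : Finset ι) (y : 𝒴)
    (πhat : 𝒳 → 𝒴 → ℝ) (hπhat01 : ∀ x y', πhat x y' ∈ Set.Icc (0:ℝ) 1)
    (hπint : ∀ k y', Integrable (fun x => γ k x * πhat x y') μ ∧
      Integrable (fun x => γhat k x * πhat x y') μ)
    (α : ℝ)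
    (hfeas : ∀ k ∈ I, ∀ k' ∈ I, |∫ x, (γhat k x - γhat k' x) * πhat x y ∂μ| ≤ α)
    (ε : ℝ) (hε : ∀ k ∈ I, ∫ x, |γ k x - γhat k x| ∂μ ≤ ε) :
    ∀ k ∈ I, ∀ k' ∈ I,
      |∫ x, (γ k x - γ k' x) * πhat x y ∂μ| ≤ min 1 (α + ε) := by
  intro k hk k' hk'
  have hπ : ∀ x, πhat x y ∈ Set.Icc (0 : ℝ) 1 := fun x => hπhat01 x y
  refine le_min (abs_integral_sub_mul_le_one (hγ0 k) (hγ0 k') (hγint k) (hγint k')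
    (hπint k y).1 (hπint k' y).1 (hγmean k) (hγmean k') hπ) ?_
  have hperturb := abs_integral_sub_mul_le_of_perturbation (hγint k) (hγint k')
    (hγhatint k) (hγhatint k') (hπint k y).1 (hπint k' y).1 (hπint k y).2 (hπint k' y).2
    ((hγmean k).trans (hγhatmean k).symm) ((hγmean k').trans (hγhatmean k').symm) hπ
  linarith [hfeas k hk k' hk', hε k hk, hε k' hk']

/-- Constraint violation under an inaccurate group predictor: if `π̂` satisfies the
plugin fairness constraints with tolerance `α` w.r.t. `γ̂`, then w.r.t. the true
normalized group functions `γ` the violation is at most `min(1, α + ε)`, where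
`ε` bounds the `L¹` deviations `E|γ_k − γ̂_k|`. -/
theorem plugin_constraint_violation
    {𝒳 𝒴 ι : Type*} [MeasurableSpace 𝒳] [Fintype 𝒴] [Fintype ι]
    (μ : Measure 𝒳) [IsProbabilityMeasure μ]
    (γ γhat : ι → 𝒳 → ℝ)
    (hγ0 : ∀ k x, 0 ≤ γ k x) (hγhat0 : ∀ k x, 0 ≤ γhat k x)
    (hγint : ∀ k, Integrable (γ k) μ) (hγhatint : ∀ k, Integrable (γhat k) μ)
    (hγmean : ∀ k, ∫ x, γ k x ∂μ = 1) (hγhatmean : ∀ k, ∫ x, γhat k x ∂μ = 1)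
    (I : Finset ι) (y : 𝒴)
    (πhat : 𝒳 → 𝒴 → ℝ) (hπhat01 : ∀ x y', πhat x y' ∈ Set.Icc (0:ℝ) 1)
    (hπint : ∀ k y', Integrable (fun x => γ k x * πhat x y') μ ∧
      Integrable (fun x => γhat k x * πhat x y') μ)
    (α : ℝ) (hα : α ∈ Set.Icc (0:ℝ) 1)
    (hfeas : ∀ k ∈ I, ∀ k' ∈ I, |∫ x, (γhat k x - γhat k' x) * πhat x y ∂μ| ≤ α)
    (ε : ℝ) (hε : ∀ k ∈ I, ∫ x, |γ k x - γhat k x| ∂μ ≤ ε) :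
    ∀ k ∈ I, ∀ k' ∈ I,
      |∫ x, (γ k x - γ k' x) * πhat x y ∂μ| ≤ min 1 (α + ε) :=
  plugin_constraint_violation_general μ γ γhat hγ0 hγint hγhatint hγmean hγhatmean I y πhat hπhat01
    hπint α hfeas ε hε
end

section
/- Excess risk from plugin group predictor: under the setting of the previous two statements, if π minimizes E_X[⟨r(X,·), π(X,·)⟩] subject to the true fairness constraints with tolerance α and π̂ minimizes the same risk subject to the plugin constraints (w.r.t. γ̂) with tolerance α, then E_X[⟨r(X,·), π̂(X,·)⟩] ≤ E_X[⟨r(X,·), π(X,·)⟩] + 2‖r‖_∞ · min(1 − α, ε/(α+ε)), where ε is the maximal L¹ deviation between the normalized group functions γ_k and γ̂_k. -/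
open MeasureTheory

/-- A randomized classifier `π'` is feasible for the fairness-constrained problem:
it is measurable, simplex-valued, and satisfies every fairness constraint
`|E_X[(γ'_k − γ'_{k'}) π'(X, y_c)]| ≤ α` for `k, k'` in the constraint's index set. -/
def FairFeasible {𝒳 𝒴 ι C : Type*} [MeasurableSpace 𝒳] [Fintype 𝒴]
    (μ : Measure 𝒳) (γ' : ι → 𝒳 → ℝ) (yc : C → 𝒴) (Ic : C → Finset ι) (α : ℝ)
    (π' : 𝒳 → 𝒴 → ℝ) : Prop :=
  (∀ y', Measurable (fun x => π' x y')) ∧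
  (∀ x, (∀ y', 0 ≤ π' x y') ∧ ∑ y', π' x y' = 1) ∧
  (∀ c : C, ∀ k ∈ Ic c, ∀ k' ∈ Ic c,
    |∫ x, (γ' k x - γ' k' x) * π' x (yc c) ∂μ| ≤ α)

/-!
Mix the true-constraint optimum `π` with a point mass: `π̃ = (1 - β) π + β δ_{y₀}` with
`β = min (1 - α) (ε / (α + ε))`. Since the plugin group functions have equal means, a
constant classifier has zero constraint value, so every plugin constraint of `π̃` is
`(1 - β)` times that of `π`. The latter is at most `α + ε`, because swapping each `γ_k`
for `γ̂_k` changes it by at most half of each `L¹` deviation, and at most `1` because the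
`γ̂_k` are nonnegative with mean `1`. Hence `π̃` is plugin-feasible, and its risk exceeds that
of `π` by at most `β ‖r‖_∞`.
-/

section ConstraintBounds

variable {𝒳 : Type*} [MeasurableSpace 𝒳] {μ : Measure 𝒳}

lemma MeasureTheory.Integrable.mul_of_mem_Icc {f p : 𝒳 → ℝ} (hf : Integrable f μ)
    (hp : Measurable p) (hp01 : ∀ x, p x ∈ Set.Icc (0 : ℝ) 1) : Integrable (fun x => f x * p x) μ :=
  hf.mul_bdd hp.aestronglyMeasurable <| ae_of_all _ fun x => by
    rw [Real.norm_eq_abs, abs_le]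
    exact ⟨by linarith [(hp01 x).1], (hp01 x).2⟩

/-- Pointwise `(f - |f|)/2 ≤ f p ≤ (f + |f|)/2`, and both bounds integrate to `∓ ∫|f|/2`. -/
lemma abs_integral_mul_le_half_integral_abs_s10 {f p : 𝒳 → ℝ} (hf : Integrable f μ)
    (hf0 : ∫ x, f x ∂μ = 0) (hp : Measurable p) (hp01 : ∀ x, p x ∈ Set.Icc (0 : ℝ) 1) :
    |∫ x, f x * p x ∂μ| ≤ (∫ x, |f x| ∂μ) / 2 := by
  have hfp := hf.mul_of_mem_Icc hp hp01
  rw [abs_le]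
  constructor
  · calc -((∫ x, |f x| ∂μ) / 2) = ∫ x, (f x - |f x|) / 2 ∂μ := by
          rw [integral_div, integral_sub hf hf.abs, hf0]; ring
      _ ≤ ∫ x, f x * p x ∂μ := integral_mono ((hf.sub hf.abs).div_const 2) hfp fun x => by
          obtain ⟨h0, h1⟩ := hp01 x
          rcases abs_cases (f x) with ⟨h, hf⟩ | ⟨h, hf⟩ <;> rw [h] <;> nlinarith
  · calc ∫ x, f x * p x ∂μ ≤ ∫ x, (f x + |f x|) / 2 ∂μ :=
          integral_mono hfp ((hf.add hf.abs).div_const 2) fun x => by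
            obtain ⟨h0, h1⟩ := hp01 x
            rcases abs_cases (f x) with ⟨h, hf⟩ | ⟨h, hf⟩ <;> rw [h] <;> nlinarith
      _ = (∫ x, |f x| ∂μ) / 2 := by
          rw [integral_div, integral_add hf hf.abs, hf0, zero_add]

lemma abs_integral_sub_mul_le_integral {g h p : 𝒳 → ℝ} (hg0 : ∀ x, 0 ≤ g x)
    (hh0 : ∀ x, 0 ≤ h x) (hg : Integrable g μ) (hh : Integrable h μ)
    (hgh : ∫ x, g x ∂μ = ∫ x, h x ∂μ) (hp : Measurable p)
    (hp01 : ∀ x, p x ∈ Set.Icc (0 : ℝ) 1) :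
    |∫ x, (g x - h x) * p x ∂μ| ≤ ∫ x, g x ∂μ := by
  calc |∫ x, (g x - h x) * p x ∂μ| ≤ (∫ x, |g x - h x| ∂μ) / 2 :=
        abs_integral_mul_le_half_integral_abs_s10 (hg.sub hh)
          (by rw [integral_sub hg hh, hgh, sub_self]) hp hp01
    _ ≤ (∫ x, (g x + h x) ∂μ) / 2 := by
        gcongr ?_ / 2
        refine integral_mono (hg.sub hh).abs (hg.add hh) fun x => ?_
        rw [abs_sub_le_iff]
        constructor <;> linarith [hg0 x, hh0 x]
    _ = ∫ x, g x ∂μ := by rw [integral_add hg hh, ← hgh]; ring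

/-- `g - ĝ` and `h - ĥ` have mean zero, so `abs_integral_mul_le_half_integral_abs` bounds
their contributions. -/
lemma abs_integral_sub_mul_le_add {g h ĝ ĥ p : 𝒳 → ℝ} (hg : Integrable g μ)
    (hh : Integrable h μ) (hĝ : Integrable ĝ μ) (hĥ : Integrable ĥ μ)
    (hgĝ : ∫ x, ĝ x ∂μ = ∫ x, g x ∂μ) (hhĥ : ∫ x, ĥ x ∂μ = ∫ x, h x ∂μ)
    (hp : Measurable p) (hp01 : ∀ x, p x ∈ Set.Icc (0 : ℝ) 1) :
    |∫ x, (ĝ x - ĥ x) * p x ∂μ|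
      ≤ |∫ x, (g x - h x) * p x ∂μ| + ((∫ x, |g x - ĝ x| ∂μ) + ∫ x, |h x - ĥ x| ∂μ) / 2 := by
  have hmul {f₁ f₂ : 𝒳 → ℝ} (h₁ : Integrable f₁ μ) (h₂ : Integrable f₂ μ) :
      Integrable (fun x => (f₁ x - f₂ x) * p x) μ :=
    (h₁.sub h₂).mul_of_mem_Icc hp hp01
  have hsplit : ∫ x, (ĝ x - ĥ x) * p x ∂μ = (∫ x, (g x - h x) * p x ∂μ)
      - (∫ x, (g x - ĝ x) * p x ∂μ) + ∫ x, (h x - ĥ x) * p x ∂μ := by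
    have hdiff : Integrable (fun x => (g x - h x) * p x - (g x - ĝ x) * p x) μ :=
      (hmul hg hh).sub (hmul hg hĝ)
    rw [← integral_sub (hmul hg hh) (hmul hg hĝ), ← integral_add hdiff (hmul hh hĥ)]
    congr 1 with x
    ring
  have hbg := abs_integral_mul_le_half_integral_abs_s10 (f := fun x => g x - ĝ x) (hg.sub hĝ)
    (by rw [integral_sub hg hĝ, hgĝ, sub_self]) hp hp01
  have hbh := abs_integral_mul_le_half_integral_abs_s10 (f := fun x => h x - ĥ x) (hh.sub hĥ)
    (by rw [integral_sub hh hĥ, hhĥ, sub_self]) hp hp01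
  rw [hsplit]
  have := abs_sub (∫ x, (g x - h x) * p x ∂μ) (∫ x, (g x - ĝ x) * p x ∂μ)
  have := abs_add_le ((∫ x, (g x - h x) * p x ∂μ) - ∫ x, (g x - ĝ x) * p x ∂μ)
    (∫ x, (h x - ĥ x) * p x ∂μ)
  linarith

end ConstraintBounds

lemma one_sub_min_mul_min_le {α ε : ℝ} (hα : 0 ≤ α) (hε : 0 ≤ ε) :
    (1 - min (1 - α) (ε / (α + ε))) * min (α + ε) 1 ≤ α := by
  rcases min_cases (1 - α) (ε / (α + ε)) with ⟨hβ, -⟩ | ⟨hβ, -⟩ <;> rw [hβ]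
  · nlinarith [min_le_right (α + ε) 1]
  · rcases (add_nonneg hα hε).eq_or_lt with hαε | hαε
    · -- `ε / 0 = 0` here, so the mixing weight vanishes and so does the tolerance.
      have hα0 : α = 0 := by linarith
      rw [← hαε, hα0]
      simp
    · have hw : 1 - ε / (α + ε) = α / (α + ε) := by field_simp; ring
      calc (1 - ε / (α + ε)) * min (α + ε) 1 ≤ α / (α + ε) * (α + ε) := by
            rw [hw]; gcongr; exact min_le_left _ _
        _ = α := div_mul_cancel₀ α hαε.ne'

section Feasibility

variable {𝒳 𝒴 ι C : Type*} [MeasurableSpace 𝒳] [Fintype 𝒴] {μ : Measure 𝒳}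
  {γ' : ι → 𝒳 → ℝ} {yc : C → 𝒴} {Ic : C → Finset ι} {α' : ℝ} {π' : 𝒳 → 𝒴 → ℝ}

namespace FairFeasible

lemma mem_Icc (h : FairFeasible μ γ' yc Ic α' π') (x : 𝒳) (y : 𝒴) :
    π' x y ∈ Set.Icc (0 : ℝ) 1 :=
  ⟨(h.2.1 x).1 y, (h.2.1 x).2 ▸ Finset.single_le_sum (fun y' _ => (h.2.1 x).1 y')
    (Finset.mem_univ y)⟩

lemma mono {α'' : ℝ} (h : FairFeasible μ γ' yc Ic α' π') (hα : α' ≤ α'') :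
    FairFeasible μ γ' yc Ic α'' π' :=
  ⟨h.1, h.2.1, fun c k hk k' hk' => (h.2.2 c k hk k' hk').trans hα⟩

lemma min_one (h : FairFeasible μ γ' yc Ic α' π') (hγ0 : ∀ k x, 0 ≤ γ' k x)
    (hγint : ∀ k, Integrable (γ' k) μ) (hγmean : ∀ k, ∫ x, γ' k x ∂μ = 1) :
    FairFeasible μ γ' yc Ic (min α' 1) π' :=
  ⟨h.1, h.2.1, fun c k hk k' hk' => le_min (h.2.2 c k hk k' hk') <| (hγmean k).symm ▸
    abs_integral_sub_mul_le_integral (hγ0 k) (hγ0 k') (hγint k) (hγint k')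
      ((hγmean k).trans (hγmean k').symm) (h.1 (yc c)) (h.mem_Icc · (yc c))⟩

lemma of_integral_abs_sub_le {γ γhat : ι → 𝒳 → ℝ} {ε : ℝ}
    (h : FairFeasible μ γ yc Ic α' π') (hγint : ∀ k, Integrable (γ k) μ)
    (hγhatint : ∀ k, Integrable (γhat k) μ) (hmean : ∀ k, ∫ x, γhat k x ∂μ = ∫ x, γ k x ∂μ)
    (hε : ∀ k, ∫ x, |γ k x - γhat k x| ∂μ ≤ ε) :
    FairFeasible μ γhat yc Ic (α' + ε) π' := by
  refine ⟨h.1, h.2.1, fun c k hk k' hk' => ?_⟩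
  calc _ ≤ |∫ x, (γ k x - γ k' x) * π' x (yc c) ∂μ|
        + ((∫ x, |γ k x - γhat k x| ∂μ) + ∫ x, |γ k' x - γhat k' x| ∂μ) / 2 :=
        abs_integral_sub_mul_le_add (hγint k) (hγint k') (hγhatint k) (hγhatint k') (hmean k)
          (hmean k') (h.1 (yc c)) (h.mem_Icc · (yc c))
    _ ≤ α' + (ε + ε) / 2 := by
        gcongr
        exacts [h.2.2 c k hk k' hk', hε k, hε k']
    _ = α' + ε := by ring

end FairFeasible

end Feasibility

noncomputable def mixDirac {𝒳 𝒴 : Type*} [DecidableEq 𝒴] (π' : 𝒳 → 𝒴 → ℝ) (β : ℝ) (y₀ : 𝒴) :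
    𝒳 → 𝒴 → ℝ :=
  fun x y => (1 - β) * π' x y + (Pi.single y₀ β : 𝒴 → ℝ) y

lemma mixDirac_apply {𝒳 𝒴 : Type*} [DecidableEq 𝒴] (π' : 𝒳 → 𝒴 → ℝ) (β : ℝ) (y₀ : 𝒴)
    (x : 𝒳) (y : 𝒴) : mixDirac π' β y₀ x y = (1 - β) * π' x y + (Pi.single y₀ β : 𝒴 → ℝ) y :=
  rfl

section Mixture

variable {𝒳 𝒴 ι C : Type*} [MeasurableSpace 𝒳] [DecidableEq 𝒴] {μ : Measure 𝒳}
  {π' : 𝒳 → 𝒴 → ℝ} (β : ℝ) (y₀ : 𝒴)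

lemma integral_mul_mixDirac {f : 𝒳 → ℝ} {y : 𝒴} (hf : Integrable f μ) (hf0 : ∫ x, f x ∂μ = 0)
    (hp : Measurable (π' · y)) (hp01 : ∀ x, π' x y ∈ Set.Icc (0 : ℝ) 1) :
    ∫ x, f x * mixDirac π' β y₀ x y ∂μ = (1 - β) * ∫ x, f x * π' x y ∂μ := by
  have hsplit : (fun x => f x * mixDirac π' β y₀ x y)
      = fun x => (1 - β) * (f x * π' x y) + f x * (Pi.single y₀ β : 𝒴 → ℝ) y := by
    funext x
    simp only [mixDirac_apply]
    ring
  rw [hsplit, integral_add ((hf.mul_of_mem_Icc hp hp01).const_mul _) (hf.mul_const _),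
    integral_const_mul, integral_mul_const, hf0, zero_mul, add_zero]

lemma integral_sum_mul_mixDirac [Fintype 𝒴] {r : 𝒳 → 𝒴 → ℝ}
    (hrπ : Integrable (fun x => ∑ y, r x y * π' x y) μ) (hr : Integrable (r · y₀) μ) :
    ∫ x, ∑ y, r x y * mixDirac π' β y₀ x y ∂μ
      = (1 - β) * (∫ x, ∑ y, r x y * π' x y ∂μ) + β * ∫ x, r x y₀ ∂μ := by
  have hsplit : (fun x => ∑ y, r x y * mixDirac π' β y₀ x y)
      = fun x => (1 - β) * ∑ y, r x y * π' x y + β * r x y₀ := by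
    funext x
    simp only [mixDirac_apply, mul_add, Finset.sum_add_distrib, Finset.mul_sum, Pi.single_apply,
      mul_ite, mul_zero, Finset.sum_ite_eq', Finset.mem_univ, if_true, mul_comm (r x y₀)]
    congr 1
    exact Finset.sum_congr rfl fun y _ => by ring
  rw [hsplit, integral_add (hrπ.const_mul _) (hr.const_mul _), integral_const_mul,
    integral_const_mul]

variable {γ' : ι → 𝒳 → ℝ} {yc : C → 𝒴} {Ic : C → Finset ι} {α' : ℝ}

lemma FairFeasible.mixDirac [Fintype 𝒴] (h : FairFeasible μ γ' yc Ic α' π')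
    (hβ : β ∈ Set.Icc (0 : ℝ) 1)
    (hγint : ∀ k, Integrable (γ' k) μ) (hmean : ∀ k k', ∫ x, γ' k x ∂μ = ∫ x, γ' k' x ∂μ) :
    FairFeasible μ γ' yc Ic ((1 - β) * α') (mixDirac π' β y₀) := by
  refine ⟨fun y => ((h.1 y).const_mul _).add measurable_const, fun x => ⟨fun y => ?_, ?_⟩,
    fun c k hk k' hk' => ?_⟩
  · have hδ : (0 : 𝒴 → ℝ) ≤ Pi.single y₀ β := Pi.single_nonneg.2 hβ.1
    exact add_nonneg (mul_nonneg (by linarith [hβ.2]) (h.mem_Icc x y).1) (hδ y)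
  · simp only [mixDirac_apply, Finset.sum_add_distrib, ← Finset.mul_sum, (h.2.1 x).2,
      Fintype.sum_pi_single']
    ring
  · rw [integral_mul_mixDirac β y₀ (f := fun x => γ' k x - γ' k' x) ((hγint k).sub (hγint k'))
      (by rw [integral_sub (hγint k) (hγint k'), hmean, sub_self]) (h.1 (yc c))
      (h.mem_Icc · (yc c)), abs_mul, abs_of_nonneg (by linarith [hβ.2])]
    exact mul_le_mul_of_nonneg_left (h.2.2 c k hk k' hk') (by linarith [hβ.2])

end Mixture

theorem plugin_group_excess_risk_general
    {𝒳 𝒴 ι C : Type*} [MeasurableSpace 𝒳] [Fintype 𝒴]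
    [Nonempty 𝒴]
    (μ : Measure 𝒳) [IsProbabilityMeasure μ]
    (r : 𝒳 → 𝒴 → ℝ) (Rb : ℝ)
    (hr : ∀ y, Measurable (fun x => r x y))
    (hr0 : ∀ x y, 0 ≤ r x y) (hrb : ∀ x y, r x y ≤ Rb)
    (γ γhat : ι → 𝒳 → ℝ)
    (hγhat0 : ∀ k x, 0 ≤ γhat k x)
    (hγint : ∀ k, Integrable (γ k) μ) (hγhatint : ∀ k, Integrable (γhat k) μ)
    (hγmean : ∀ k, ∫ x, γ k x ∂μ = 1) (hγhatmean : ∀ k, ∫ x, γhat k x ∂μ = 1)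
    (yc : C → 𝒴) (Ic : C → Finset ι)
    (α : ℝ) (hα : α ∈ Set.Icc (0:ℝ) 1)
    (ε : ℝ) (hε0 : 0 ≤ ε)
    (hε : ∀ k : ι, ∫ x, |γ k x - γhat k x| ∂μ ≤ ε)
    (π πhat : 𝒳 → 𝒴 → ℝ)
    (hπF : FairFeasible μ γ yc Ic α π)
    (hπhatmin : ∀ π', FairFeasible μ γhat yc Ic α π' →
      ∫ x, ∑ y, r x y * πhat x y ∂μ ≤ ∫ x, ∑ y, r x y * π' x y ∂μ) :
    ∫ x, ∑ y, r x y * πhat x y ∂μ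
      ≤ (∫ x, ∑ y, r x y * π x y ∂μ)
        + 2 * Rb * min (1 - α) (ε / (α + ε)) := by
  classical
  set β := min (1 - α) (ε / (α + ε))
  have hβ : β ∈ Set.Icc (0 : ℝ) 1 :=
    ⟨le_min (by linarith [hα.2]) (div_nonneg hε0 (by linarith [hα.1])),
      (min_le_left _ _).trans (by linarith [hα.1])⟩
  let y₀ : 𝒴 := Classical.arbitrary 𝒴
  have hplugin : FairFeasible μ γhat yc Ic (min (α + ε) 1) π :=
    (hπF.of_integral_abs_sub_le hγint hγhatint (fun k => (hγhatmean k).trans (hγmean k).symm)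
      hε).min_one hγhat0 hγhatint hγhatmean
  have hmix : FairFeasible μ γhat yc Ic α (mixDirac π β y₀) :=
    (hplugin.mixDirac β y₀ hβ hγhatint fun k k' => (hγhatmean k).trans (hγhatmean k').symm).mono
      (one_sub_min_mul_min_le hα.1 hε0)
  have hrint (y : 𝒴) : Integrable (r · y) μ :=
    Integrable.of_bound (hr y).aestronglyMeasurable Rb <| ae_of_all _ fun x => by
      rw [Real.norm_eq_abs, abs_of_nonneg (hr0 x y)]
      exact hrb x y
  have hrisk : Integrable (fun x => ∑ y, r x y * π x y) μ :=
    integrable_finsetSum _ fun y _ => (hrint y).mul_of_mem_Icc (hπF.1 y) (hπF.mem_Icc · y)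
  have hrisk0 : 0 ≤ ∫ x, ∑ y, r x y * π x y ∂μ :=
    integral_nonneg fun x => Finset.sum_nonneg fun y _ => mul_nonneg (hr0 x y) (hπF.mem_Icc x y).1
  have hry₀0 : 0 ≤ ∫ x, r x y₀ ∂μ := integral_nonneg fun x => hr0 x y₀
  have hry₀ : ∫ x, r x y₀ ∂μ ≤ Rb := by
    simpa using integral_mono (hrint y₀) (integrable_const Rb) fun x => hrb x y₀
  calc _ ≤ ∫ x, ∑ y, r x y * mixDirac π β y₀ x y ∂μ := hπhatmin _ hmix
    _ = (1 - β) * (∫ x, ∑ y, r x y * π x y ∂μ) + β * ∫ x, r x y₀ ∂μ :=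
        integral_sum_mul_mixDirac β y₀ hrisk (hrint y₀)
    _ ≤ _ := by nlinarith [mul_nonneg hβ.1 hrisk0, mul_le_mul_of_nonneg_left hry₀ hβ.1,
        mul_nonneg hβ.1 hry₀0]

/-- Excess risk from a plugin group predictor: if `π` minimizes the risk subject to
the true fairness constraints (w.r.t. `γ`) and `π̂` minimizes the same risk subject
to the plugin constraints (w.r.t. `γ̂`), both with tolerance `α`, then the risk of
`π̂` exceeds that of `π` by at most `2‖r‖_∞ · min(1−α, ε/(α+ε))`. -/
theorem plugin_group_excess_risk
    {𝒳 𝒴 ι C : Type*} [MeasurableSpace 𝒳] [Fintype 𝒴] [Fintype ι] [Fintype C]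
    [Nonempty 𝒴]
    (μ : Measure 𝒳) [IsProbabilityMeasure μ]
    (r : 𝒳 → 𝒴 → ℝ) (Rb : ℝ)
    (hr : ∀ y, Measurable (fun x => r x y))
    (hr0 : ∀ x y, 0 ≤ r x y) (hrb : ∀ x y, r x y ≤ Rb)
    (γ γhat : ι → 𝒳 → ℝ)
    (hγmeas : ∀ k, Measurable (γ k)) (hγhatmeas : ∀ k, Measurable (γhat k))
    (hγ0 : ∀ k x, 0 ≤ γ k x) (hγhat0 : ∀ k x, 0 ≤ γhat k x)
    (hγint : ∀ k, Integrable (γ k) μ) (hγhatint : ∀ k, Integrable (γhat k) μ)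
    (hγmean : ∀ k, ∫ x, γ k x ∂μ = 1) (hγhatmean : ∀ k, ∫ x, γhat k x ∂μ = 1)
    (yc : C → 𝒴) (Ic : C → Finset ι)
    (α : ℝ) (hα : α ∈ Set.Icc (0:ℝ) 1)
    (ε : ℝ) (hε0 : 0 ≤ ε)
    (hε : ∀ k : ι, ∫ x, |γ k x - γhat k x| ∂μ ≤ ε)
    (π πhat : 𝒳 → 𝒴 → ℝ)
    (hπF : FairFeasible μ γ yc Ic α π)
    (hπhatF : FairFeasible μ γhat yc Ic α πhat)
    (hπmin : ∀ π', FairFeasible μ γ yc Ic α π' →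
      ∫ x, ∑ y, r x y * π x y ∂μ ≤ ∫ x, ∑ y, r x y * π' x y ∂μ)
    (hπhatmin : ∀ π', FairFeasible μ γhat yc Ic α π' →
      ∫ x, ∑ y, r x y * πhat x y ∂μ ≤ ∫ x, ∑ y, r x y * π' x y ∂μ) :
    ∫ x, ∑ y, r x y * πhat x y ∂μ
      ≤ (∫ x, ∑ y, r x y * π x y ∂μ)
        + 2 * Rb * min (1 - α) (ε / (α + ε)) :=
  plugin_group_excess_risk_general μ r Rb hr hr0 hrb γ γhat hγhat0 hγint hγhatint hγmean hγhatmean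
    yc Ic α hα ε hε0 hε π πhat hπF hπhatmin
end

section
/- Disagreement bound between the deterministic argmin classifier and a randomized solution: let u : 𝒳 → ℝ^m be a feature map, β_1,...,β_L ∈ ℝ^m class coefficient vectors, and suppose points x_1,...,x_N satisfy: for each pair y ≠ y', at most one index i has (β_y − β_{y'})ᵀ u(x_i) = 0. Let ĥ(x) = min(argmin_y β_yᵀ u(x)), and let π : 𝒳 → Δ([L]) satisfy π(x_i, y) > 0 ⟹ y ∈ argmin_{y'} β_{y'}ᵀ u(x_i) for all i. Then for every class y, ∑_{i=1}^N |𝟙[ĥ(x_i) = y] − π(x_i, y)| ≤ L − 1. -/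
open Matrix

/-!
At a sample where class `y` ties with no other class, both `ĥ` and `π` are forced:
`π` is supported on the minimizers, which either are exactly `{y}` or exclude `y`, so the
indicator and `π(xᵢ, y)` coincide. Every other sample contributes at most `1`, and it lies on
the boundary between `y` and some `y' ≠ y`; each of these `L - 1` boundaries holds at most
one sample.
-/

open Finset

section Argmin

variable {ι : Type*} [Fintype ι]

lemma le_one_of_sum_eq_one {p : ι → ℝ} (hp0 : ∀ j, 0 ≤ p j) (hp1 : ∑ j, p j = 1) (j : ι) :
    p j ≤ 1 :=
  hp1 ▸ single_le_sum (fun k _ => hp0 k) (mem_univ j)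

variable [DecidableEq ι] {s p : ι → ℝ} {c y : ι}

lemma abs_indicator_sub_le_one (hp0 : ∀ j, 0 ≤ p j) (hp1 : ∑ j, p j = 1) :
    |(if c = y then (1 : ℝ) else 0) - p y| ≤ 1 := by
  have := hp0 y
  have := le_one_of_sum_eq_one hp0 hp1 y
  rw [abs_sub_le_iff]
  constructor <;> split_ifs <;> linarith

lemma indicator_eq_of_forall_ne_score
    (hc : ∀ j, s c ≤ s j) (hp0 : ∀ j, 0 ≤ p j) (hp1 : ∑ j, p j = 1)
    (hsupp : ∀ j, 0 < p j → ∀ k, s j ≤ s k) (hy : ∀ y', y' ≠ y → s y ≠ s y') :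
    (if c = y then (1 : ℝ) else 0) = p y := by
  have score_eq_of_pos : ∀ j, 0 < p j → s j = s c := fun j hj =>
    le_antisymm (hsupp j hj c) (hc j)
  have eq_zero_of_ne : ∀ j, s j ≠ s c → p j = 0 := fun j hj =>
    ((hp0 j).eq_or_lt.resolve_right fun hpos => hj (score_eq_of_pos j hpos)).symm
  split_ifs with hcy
  · subst hcy
    rw [← hp1, sum_eq_single c (fun j _ hj => eq_zero_of_ne j (hy j hj).symm) (by simp)]
  · exact (eq_zero_of_ne y (hy c hcy)).symm

end Argmin

lemma card_filter_exists_le {α β : Type*} [Fintype α] [DecidableEq α] (T : Finset β)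
    (R : α → β → Prop) [DecidableRel R] (h : ∀ b ∈ T, {a | R a b}.Subsingleton) :
    #{a | ∃ b ∈ T, R a b} ≤ #T := by
  have hsub : ({a | ∃ b ∈ T, R a b} : Finset α) ⊆ T.biUnion fun b => {a | R a b} := by
    intro a ha
    simpa using ha
  have hfiber : ∀ b ∈ T, #({a | R a b} : Finset α) ≤ 1 := fun b hb =>
    card_le_one.2 fun a₁ ha₁ a₂ ha₂ => h b hb (by simpa using ha₁) (by simpa using ha₂)
  simpa using (card_le_card hsub).trans (card_biUnion_le_card_mul T _ 1 hfiber)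

/-- Disagreement bound between the deterministic argmin classifier `ĥ` and a
randomized solution `π` supported on the argmin: if for each pair of classes at
most one sample lies on their decision boundary, then for every class `y` the
total disagreement `∑ᵢ |𝟙[ĥ(xᵢ)=y] − π(xᵢ,y)|` is at most `L − 1`. -/
theorem argmin_disagreement_bound
    {𝒳 : Type*} (m L N : ℕ)
    (u : 𝒳 → Fin m → ℝ) (β : Fin L → Fin m → ℝ)
    (x : Fin N → 𝒳)
    (hboundary : ∀ y y' : Fin L, y ≠ y' →
      {i : Fin N | (β y - β y') ⬝ᵥ u (x i) = 0}.Subsingleton)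
    (hhat : 𝒳 → Fin L)
    (hhat_def : ∀ z : 𝒳,
      (∀ y : Fin L, β (hhat z) ⬝ᵥ u z ≤ β y ⬝ᵥ u z) ∧
      (∀ y : Fin L, y < hhat z → β (hhat z) ⬝ᵥ u z < β y ⬝ᵥ u z))
    (π : 𝒳 → Fin L → ℝ)
    (hπsimplex : ∀ z, (∀ y, 0 ≤ π z y) ∧ ∑ y, π z y = 1)
    (hπsupp : ∀ i : Fin N, ∀ y : Fin L, 0 < π (x i) y →
      ∀ y' : Fin L, β y ⬝ᵥ u (x i) ≤ β y' ⬝ᵥ u (x i)) :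
    ∀ y : Fin L,
      ∑ i, |(if hhat (x i) = y then (1:ℝ) else 0) - π (x i) y| ≤ (L : ℝ) - 1 := by
  classical
  intro y
  set T : Finset (Fin N) := {i | ∃ y' ∈ univ.erase y, (β y - β y') ⬝ᵥ u (x i) = 0}
  have hT : (#T : ℝ) ≤ L - 1 := by
    have := card_filter_exists_le (univ.erase y) (fun i y' => (β y - β y') ⬝ᵥ u (x i) = 0)
      fun y' hy' => hboundary y y' (ne_of_mem_erase hy').symm
    rw [card_erase_of_mem (mem_univ y), card_univ, Fintype.card_fin] at this
    rw [le_sub_iff_add_le]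
    exact_mod_cast Nat.add_le_of_le_sub (Fin.pos y) this
  have hterm : ∀ i, |(if hhat (x i) = y then (1:ℝ) else 0) - π (x i) y| ≤
      if i ∈ T then 1 else 0 := by
    intro i
    obtain ⟨hπ0, hπ1⟩ := hπsimplex (x i)
    by_cases hi : i ∈ T
    · rw [if_pos hi]
      exact abs_indicator_sub_le_one hπ0 hπ1
    · rw [if_neg hi]
      have hy : ∀ y', y' ≠ y → β y ⬝ᵥ u (x i) ≠ β y' ⬝ᵥ u (x i) := fun y' hy' heq =>
        hi (mem_filter.2 ⟨mem_univ i, y', mem_erase.2 ⟨hy', mem_univ y'⟩,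
          by rw [sub_dotProduct, heq, sub_self]⟩)
      rw [indicator_eq_of_forall_ne_score (hhat_def (x i)).1 hπ0 hπ1 (hπsupp i) hy,
        sub_self, abs_zero]
  calc ∑ i, |(if hhat (x i) = y then (1:ℝ) else 0) - π (x i) y|
      ≤ ∑ i, if i ∈ T then (1 : ℝ) else 0 := sum_le_sum fun i _ => hterm i
    _ = #T := by rw [sum_boole, filter_mem_eq_inter, univ_inter]
    _ ≤ L - 1 := hT
end
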